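/- arXiv:0804.4397 — 2 statements merged into one kernel-verified Lean document; each statement's English description precedes it below -/
import Mathlib

section
/- Let α0, α1 be complex constants, U an open subset of ℂ with 0 ∉ U, and let q, p : U → ℂ be differentiable functions satisfying the third Painlevé system. Define u(t) := H_III(q(t), p(t), t; α0, α1). Then for every t ∈ U, p(t) = t·u'(t) + u(t). -/
/-- The third Painlevé Hamiltonian. -/
noncomputable def HIII (α0 α1 q p t : ℂ) : ℂ :=
  (q ^ 2 * p * (p - 1) + q * ((1 - 2 * α1) * p - α0) + t * p) / t

/-- `q, p` satisfy the third Painlevé (Hamiltonian) system on `U`. -/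
def PainleveIIISystem (α0 α1 : ℂ) (U : Set ℂ) (q p : ℂ → ℂ) : Prop :=
  ∀ t ∈ U,
    HasDerivAt q (((q t) ^ 2 * (2 * p t - 1) + (1 - 2 * α1) * q t + t) / t) t ∧
    HasDerivAt p (-(2 * q t * p t * (p t - 1) + (1 - 2 * α1) * p t - α0) / t) t

/-!
For `t ≠ 0`, `t · H_III = K(q, p, t)` with `K = tHIII` polynomial. Since
`∂K/∂q = t ∂H/∂q = -t p'` and `∂K/∂p = t ∂H/∂p = t q'`, the chain rule gives
`d/dt K(q, p, t) = -t p' q' + t q' p' + ∂K/∂t = p`. Hence `p = (t u)' = t u' + u`.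
-/

def tHIII (α0 α1 q p t : ℂ) : ℂ :=
  q ^ 2 * p * (p - 1) + q * ((1 - 2 * α1) * p - α0) + t * p

theorem HasDerivAt.mul_deriv_div_id_add {𝕜 : Type*} [NontriviallyNormedField 𝕜]
    {N : 𝕜 → 𝕜} {a t : 𝕜} (hN : HasDerivAt N a t) (ht : t ≠ 0) :
    t * _root_.deriv (fun s => N s / s) t + N t / t = a := by
  rw [(hN.fun_div (hasDerivAt_id' t) ht).deriv]
  field_simp
  ring

theorem hasDerivAt_tHIII_comp (α0 α1 : ℂ) {q p : ℂ → ℂ} {q' p' t : ℂ}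
    (hq : HasDerivAt q q' t) (hp : HasDerivAt p p' t) :
    HasDerivAt (fun s => tHIII α0 α1 (q s) (p s) s)
      ((2 * q t * p t * (p t - 1) + (1 - 2 * α1) * p t - α0) * q'
        + (q t ^ 2 * (2 * p t - 1) + (1 - 2 * α1) * q t + t) * p' + p t) t := by
  have h := ((((hq.pow 2).mul hp).mul (hp.sub_const 1)).add
    (hq.mul ((hp.const_mul (1 - 2 * α1)).sub_const α0))).add ((hasDerivAt_id t).mul hp)
  refine h.congr_deriv ?_
  simp only [Pi.pow_apply, Pi.mul_apply, Nat.cast_ofNat, id]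
  ring

theorem PainleveIIISystem.hasDerivAt_tHIII {α0 α1 : ℂ} {U : Set ℂ} {q p : ℂ → ℂ}
    (hqp : PainleveIIISystem α0 α1 U q p) {t : ℂ} (ht : t ∈ U) :
    HasDerivAt (fun s => tHIII α0 α1 (q s) (p s) s) (p t) t := by
  obtain ⟨hq, hp⟩ := hqp t ht
  refine (hasDerivAt_tHIII_comp α0 α1 hq hp).congr_deriv ?_
  ring

theorem p_eq_of_third_Painleve_Hamiltonian_general
    (α0 α1 : ℂ) (U : Set ℂ) (h0 : (0 : ℂ) ∉ U)
    (q p : ℂ → ℂ) (hqp : PainleveIIISystem α0 α1 U q p)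
    (u : ℂ → ℂ) (hu : u = fun t => HIII α0 α1 (q t) (p t) t) :
    ∀ t ∈ U, p t = t * deriv u t + u t := by
  intro t ht
  subst hu
  exact ((hqp.hasDerivAt_tHIII ht).mul_deriv_div_id_add (ne_of_mem_of_not_mem ht h0)).symm

/-- Along solutions of the third Painlevé system, `p = t·u' + u`. -/
theorem p_eq_of_third_Painleve_Hamiltonian
    (α0 α1 : ℂ) (U : Set ℂ) (hU : IsOpen U) (h0 : (0 : ℂ) ∉ U)
    (q p : ℂ → ℂ) (hqp : PainleveIIISystem α0 α1 U q p)
    (u : ℂ → ℂ) (hu : u = fun t => HIII α0 α1 (q t) (p t) t) :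
    ∀ t ∈ U, p t = t * deriv u t + u t :=
  p_eq_of_third_Painleve_Hamiltonian_general α0 α1 U h0 q p hqp u hu
end

section
/- Let α0, α1 be complex constants, U an open subset of ℂ with 0 ∉ U, and let q, p : U → ℂ be differentiable functions satisfying the third Painlevé system, with p in addition differentiable so that u(t) := H_III(q(t), p(t), t; α0, α1) is twice differentiable. Then at every t ∈ U where α0 + (2α1−1)u(t) + t(2α1+1)u'(t) + t²u''(t) ≠ 0, one has q(t) = 2t²·u'(t) / (α0 + (2α1−1)u(t) + t(2α1+1)u'(t) + t²u''(t)). -/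
/-!
Along a solution, `u = H_III(q, p, t)` changes only through the explicit dependence on `t`,
so `t u' = p - u`. Differentiating once more gives `t² u'' = t p' - 2(p - u)`, and substituting
the equation for `p'` turns the denominator into
`α0 + (2α1 - 1)p + t p' = -2(q p (p - 1) + (1 - 2α1)p - α0)`.
Multiplied by `q` this is `2t(p - u) = 2t² u'`, since `t(u - p) = q(q p (p - 1) + (1 - 2α1)p - α0)`.
-/

theorem mul_HIII_sub {α0 α1 q p t : ℂ} (ht : t ≠ 0) :
    t * (HIII α0 α1 q p t - p) = q * (q * p * (p - 1) + (1 - 2 * α1) * p - α0) := by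
  unfold HIII
  field_simp
  ring

theorem hasDerivAt_HIII_comp {α0 α1 : ℂ} {U : Set ℂ} {q p : ℂ → ℂ}
    (hqp : PainleveIIISystem α0 α1 U q p) {t : ℂ} (ht : t ∈ U) (ht0 : t ≠ 0) :
    HasDerivAt (fun s => HIII α0 α1 (q s) (p s) s)
      ((p t - HIII α0 α1 (q t) (p t) t) / t) t := by
  obtain ⟨hq, hp⟩ := hqp t ht
  have hnum := ((((hq.pow 2).mul hp).mul (hp.sub_const 1)).add
    (hq.mul ((hp.const_mul (1 - 2 * α1)).sub_const α0))).add ((hasDerivAt_id t).mul hp)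
  refine ((hnum.div (hasDerivAt_id t) ht0).congr_of_eventuallyEq
    (.of_forall fun s => ?_)).congr_deriv ?_
  · simp only [HIII, Pi.div_apply, Pi.add_apply, Pi.mul_apply, Pi.pow_apply, id]
  · simp only [HIII, id, Pi.add_apply, Pi.mul_apply, Pi.pow_apply]
    field_simp
    ring

theorem q_eq_of_third_Painleve_Hamiltonian_general
    (α0 α1 : ℂ) (U : Set ℂ) (hU : IsOpen U) (h0 : (0 : ℂ) ∉ U)
    (q p : ℂ → ℂ) (hqp : PainleveIIISystem α0 α1 U q p)
    (u : ℂ → ℂ) (hu : u = fun t => HIII α0 α1 (q t) (p t) t) :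
    ∀ t ∈ U,
      α0 + (2 * α1 - 1) * u t + t * (2 * α1 + 1) * deriv u t
          + t ^ 2 * deriv (deriv u) t ≠ 0 →
      q t = 2 * t ^ 2 * deriv u t /
        (α0 + (2 * α1 - 1) * u t + t * (2 * α1 + 1) * deriv u t
          + t ^ 2 * deriv (deriv u) t) := by
  have hu' : ∀ s ∈ U, HasDerivAt u ((p s - u s) / s) s := fun s hs =>
    hu ▸ hasDerivAt_HIII_comp hqp hs (ne_of_mem_of_not_mem hs h0)
  intro t ht hD
  have ht0 : t ≠ 0 := ne_of_mem_of_not_mem ht h0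
  have hderiv_eq : deriv u =ᶠ[nhds t] fun s => (p s - u s) / s := by
    filter_upwards [hU.mem_nhds ht] with s hs using (hu' s hs).deriv
  have hu'' := (((hqp t ht).2.sub (hu' t ht)).div (hasDerivAt_id t) ht0).congr_of_eventuallyEq
    hderiv_eq
  have hH : t * (u t - p t) = q t * (q t * p t * (p t - 1) + (1 - 2 * α1) * p t - α0) := by
    subst hu
    exact mul_HIII_sub ht0
  rw [eq_div_iff hD, (hu' t ht).deriv, hu''.deriv]
  simp only [id, Pi.sub_apply]
  field_simp
  linear_combination 2 * hH

/-- Along solutions of the third Painlevé system, with `u` twice differentiable,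
`q = 2t²u' / (α0 + (2α1−1)u + t(2α1+1)u' + t²u'')` wherever the denominator
is nonzero. -/
theorem q_eq_of_third_Painleve_Hamiltonian
    (α0 α1 : ℂ) (U : Set ℂ) (hU : IsOpen U) (h0 : (0 : ℂ) ∉ U)
    (q p : ℂ → ℂ) (hqp : PainleveIIISystem α0 α1 U q p)
    (u : ℂ → ℂ) (hu : u = fun t => HIII α0 α1 (q t) (p t) t)
    (hu1 : ∀ t ∈ U, DifferentiableAt ℂ u t)
    (hu2 : ∀ t ∈ U, DifferentiableAt ℂ (deriv u) t) :
    ∀ t ∈ U,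
      α0 + (2 * α1 - 1) * u t + t * (2 * α1 + 1) * deriv u t
          + t ^ 2 * deriv (deriv u) t ≠ 0 →
      q t = 2 * t ^ 2 * deriv u t /
        (α0 + (2 * α1 - 1) * u t + t * (2 * α1 + 1) * deriv u t
          + t ^ 2 * deriv (deriv u) t) :=
  q_eq_of_third_Painleve_Hamiltonian_general α0 α1 U hU h0 q p hqp u hu
end
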